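/- arXiv:2206.07875 — 2 statements merged into one kernel-verified Lean document; each statement's English description precedes it below -/
import Mathlib

section
/- Let H be a symmetric positive definite real n×n matrix and let ℓ : ℝⁿ → ℝ be convex and differentiable with L-Lipschitz gradient, L > 0. Then for all u₁, u₂ ∈ ℝⁿ, ⟨H⁻¹∇ℓ(u₁) − H⁻¹∇ℓ(u₂), u₁ − u₂⟩_H ≥ (λ_min(H)/L)·‖H⁻¹∇ℓ(u₁) − H⁻¹∇ℓ(u₂)‖²_H; that is, the map u ↦ H⁻¹∇ℓ(u) is (λ_min(H)/L)-cocoercive with respect to the inner product ⟨·,·⟩_H. -/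
/-!
Put `Δ = ∇ℓ(u₁) - ∇ℓ(u₂)` and `w = H⁻¹Δ`. Since `H` is symmetric, `⟨w, u₁ - u₂⟩_H = ⟪Δ, u₁ - u₂⟫`
and `‖w‖²_H = ⟪w, Δ⟫`, so everything reduces to two Euclidean facts.

* Baillon–Haddad: the gradient of a convex function with `L`-Lipschitz gradient is
  `1/L`-cocoercive, `‖Δ‖² / L ≤ ⟪Δ, u₁ - u₂⟫`. Evaluating the tangent lower bound at `x` and the
  quadratic upper bound at `y` in the point `y - (∇ℓ y - ∇ℓ x) / L` gives
  `ℓ x + ⟪∇ℓ x, y - x⟫ + ‖∇ℓ y - ∇ℓ x‖² / (2L) ≤ ℓ y`; adding this to its mirror image proves it.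
* Rayleigh: `λ_min ‖w‖² ≤ ⟪w, Hw⟫ = ⟪w, Δ⟫ ≤ ‖w‖ ‖Δ‖`, whence `λ_min ⟪w, Δ⟫ ≤ ‖Δ‖²`.
-/

open scoped RealInnerProductSpace
open Filter Topology

/-- The `H`-inner product `⟨u, v⟩_H = uᵀ H v` on `ℝⁿ`. -/
noncomputable def hIP {n : ℕ} (H : Matrix (Fin n) (Fin n) ℝ)
    (u v : EuclideanSpace ℝ (Fin n)) : ℝ :=
  ⟪u, Matrix.toEuclideanLin H v⟫

/-- The `H`-norm `‖u‖_H = √(uᵀ H u)` on `ℝⁿ`. -/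
noncomputable def hNorm {n : ℕ} (H : Matrix (Fin n) (Fin n) ℝ)
    (u : EuclideanSpace ℝ (Fin n)) : ℝ :=
  Real.sqrt (hIP H u u)

/-- The smallest eigenvalue `λ_min(H)` of a Hermitian matrix `H`. -/
noncomputable def lambdaMin {n : ℕ} (H : Matrix (Fin n) (Fin n) ℝ)
    (hH : H.IsHermitian) : ℝ :=
  ⨅ i, hH.eigenvalues i

theorem image_one_le_of_deriv_sub_le {g g' : ℝ → ℝ} {K : ℝ} (hg : ∀ t, HasDerivAt g (g' t) t)
    (hK : ∀ t, 0 < t → g' t - g' 0 ≤ K * t) : g 1 ≤ g 0 + g' 0 + K / 2 := by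
  set φ : ℝ → ℝ := fun t => g t - g' 0 * t - K / 2 * t ^ 2
  have hφ : ∀ t, HasDerivAt φ (g' t - g' 0 - K * t) t := fun t => by
    refine (((hg t).sub ((hasDerivAt_id' t).const_mul (g' 0))).sub
      ((hasDerivAt_pow 2 t).const_mul (K / 2))).congr_deriv ?_
    push_cast
    ring
  have hanti : AntitoneOn φ (Set.Ici 0) := by
    refine antitoneOn_of_hasDerivWithinAt_nonpos (convex_Ici 0)
      (HasDerivAt.continuousOn fun t _ => hφ t) (fun t _ => (hφ t).hasDerivWithinAt) ?_
    intro t ht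
    rw [interior_Ici] at ht
    linarith [hK t ht]
  have := hanti Set.self_mem_Ici (show (1 : ℝ) ∈ Set.Ici 0 by norm_num) zero_le_one
  simp only [φ] at this
  linarith

section Smooth

variable {E : Type*} [NormedAddCommGroup E] [InnerProductSpace ℝ E] [CompleteSpace E]
  {f : E → ℝ} {L : ℝ}

theorem HasGradientAt.hasDerivAt_comp_add_smul {g x d : E} {t : ℝ}
    (h : HasGradientAt f g (x + t • d)) :
    HasDerivAt (fun s : ℝ => f (x + s • d)) ⟪g, d⟫ t := by
  have hline : HasDerivAt (fun s : ℝ => x + s • d) d t := by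
    simpa using ((hasDerivAt_id t).smul_const d).const_add x
  exact (hasGradientAt_iff_hasFDerivAt.1 h).comp_hasDerivAt t hline

theorem ConvexOn.add_inner_gradient_le (hf : ConvexOn ℝ Set.univ f) {x : E}
    (hx : DifferentiableAt ℝ f x) (y : E) : f x + ⟪gradient f x, y - x⟫ ≤ f y := by
  have hline : ConvexOn ℝ Set.univ fun s : ℝ => f (x + s • (y - x)) := by
    simpa [Function.comp_def, AffineMap.lineMap_apply_module', add_comm]
      using hf.comp_affineMap (AffineMap.lineMap x y)
  have hderiv : HasDerivAt (fun s : ℝ => f (x + s • (y - x))) ⟪gradient f x, y - x⟫ 0 :=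
    HasGradientAt.hasDerivAt_comp_add_smul (by simpa using hx.hasGradientAt)
  have := hline.le_slope_of_hasDerivAt (Set.mem_univ 0) (Set.mem_univ 1) zero_lt_one hderiv
  simp only [slope_def_field, zero_smul, add_zero, one_smul, add_sub_cancel, sub_zero,
    div_one] at this
  linarith

theorem le_add_inner_gradient_add_half_mul_norm_sq (hf : Differentiable ℝ f)
    (hL : ∀ u v, ‖gradient f u - gradient f v‖ ≤ L * ‖u - v‖) (x y : E) :
    f y ≤ f x + ⟪gradient f x, y - x⟫ + L / 2 * ‖y - x‖ ^ 2 := by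
  set d := y - x
  have hderiv : ∀ t : ℝ, HasDerivAt (fun s : ℝ => f (x + s • d))
      ⟪gradient f (x + t • d), d⟫ t :=
    fun t => (hf _).hasGradientAt.hasDerivAt_comp_add_smul
  have hK : ∀ t : ℝ, 0 < t →
      ⟪gradient f (x + t • d), d⟫ - ⟪gradient f (x + (0 : ℝ) • d), d⟫ ≤ L * ‖d‖ ^ 2 * t := by
    intro t ht
    calc ⟪gradient f (x + t • d), d⟫ - ⟪gradient f (x + (0 : ℝ) • d), d⟫
        = ⟪gradient f (x + t • d) - gradient f x, d⟫ := by simp [inner_sub_left]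
      _ ≤ ‖gradient f (x + t • d) - gradient f x‖ * ‖d‖ := real_inner_le_norm _ _
      _ ≤ L * ‖x + t • d - x‖ * ‖d‖ := by gcongr; exact hL _ _
      _ = L * ‖d‖ ^ 2 * t := by
        rw [add_sub_cancel_left, norm_smul, Real.norm_of_nonneg ht.le]
        ring
  have := image_one_le_of_deriv_sub_le hderiv hK
  simp only [zero_smul, add_zero, one_smul, d, add_sub_cancel] at this
  linarith

theorem ConvexOn.add_inner_gradient_add_norm_sq_le (hconv : ConvexOn ℝ Set.univ f)
    (hf : Differentiable ℝ f) (hL₀ : 0 < L)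
    (hL : ∀ u v, ‖gradient f u - gradient f v‖ ≤ L * ‖u - v‖) (x y : E) :
    f x + ⟪gradient f x, y - x⟫ + ‖gradient f y - gradient f x‖ ^ 2 / (2 * L) ≤ f y := by
  set Δ := gradient f y - gradient f x
  set z := y - L⁻¹ • Δ
  have hz_lower := hconv.add_inner_gradient_le (hf x) z
  have hz_upper := le_add_inner_gradient_add_half_mul_norm_sq hf hL y z
  have hzy : z - y = -(L⁻¹ • Δ) := by simp [z]
  have hzx : z - x = (y - x) - L⁻¹ • Δ := by simp only [z]; abel
  rw [hzy, inner_neg_right, real_inner_smul_right, norm_neg, norm_smul,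
    Real.norm_of_nonneg (inv_nonneg.2 hL₀.le)] at hz_upper
  rw [hzx, inner_sub_right, real_inner_smul_right] at hz_lower
  have hΔ : ⟪gradient f y, Δ⟫ - ⟪gradient f x, Δ⟫ = ‖Δ‖ ^ 2 := by
    rw [← inner_sub_left, real_inner_self_eq_norm_sq]
  field_simp at hz_upper hz_lower ⊢
  linarith

theorem ConvexOn.norm_gradient_sub_sq_div_le_inner (hconv : ConvexOn ℝ Set.univ f)
    (hf : Differentiable ℝ f) (hL₀ : 0 < L)
    (hL : ∀ u v, ‖gradient f u - gradient f v‖ ≤ L * ‖u - v‖) (x y : E) :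
    ‖gradient f x - gradient f y‖ ^ 2 / L ≤ ⟪gradient f x - gradient f y, x - y⟫ := by
  have hxy := hconv.add_inner_gradient_add_norm_sq_le hf hL₀ hL x y
  have hyx := hconv.add_inner_gradient_add_norm_sq_le hf hL₀ hL y x
  rw [norm_sub_rev] at hxy
  have : ⟪gradient f x - gradient f y, x - y⟫
      = -⟪gradient f x, y - x⟫ - ⟪gradient f y, x - y⟫ := by
    rw [inner_sub_left, ← neg_sub x y, inner_neg_right]; ring
  rw [this]
  have : ‖gradient f x - gradient f y‖ ^ 2 / L
      = 2 * (‖gradient f x - gradient f y‖ ^ 2 / (2 * L)) := by field_simp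
  linarith

end Smooth

theorem real_mul_inner_le_norm_sq_of_mul_norm_sq_le_inner {E : Type*} [NormedAddCommGroup E]
    [InnerProductSpace ℝ E] {c : ℝ} (hc : 0 ≤ c) {x y : E} (h : c * ‖x‖ ^ 2 ≤ ⟪x, y⟫) :
    c * ⟪x, y⟫ ≤ ‖y‖ ^ 2 := by
  have hcs := real_inner_le_norm x y
  -- ‖y‖² - c⟪x,y⟫ = (‖y‖ - c‖x‖)² + 2c(‖x‖‖y‖ - ⟪x,y⟫) + c(⟪x,y⟫ - c‖x‖²)
  nlinarith [sq_nonneg (‖y‖ - c * ‖x‖), mul_nonneg hc (sub_nonneg.2 hcs),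
    mul_nonneg hc (sub_nonneg.2 h)]

theorem Matrix.IsHermitian.mul_norm_sq_le_inner_toEuclideanLin {m : Type*} [Fintype m]
    [DecidableEq m] {A : Matrix m m ℝ} (hA : A.IsHermitian) {c : ℝ}
    (hc : ∀ i, c ≤ hA.eigenvalues i) (x : EuclideanSpace ℝ m) :
    c * ‖x‖ ^ 2 ≤ ⟪x, Matrix.toEuclideanLin A x⟫ := by
  set b := hA.eigenvectorBasis
  have heig : ∀ j, Matrix.toEuclideanLin A (b j) = hA.eigenvalues j • b j := fun j => by
    ext i
    simpa using congrFun (hA.mulVec_eigenvectorBasis j) i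
  have hexpand : ⟪x, Matrix.toEuclideanLin A x⟫ = ∑ j, hA.eigenvalues j * ⟪x, b j⟫ ^ 2 := by
    rw [← b.sum_inner_mul_inner]
    refine Finset.sum_congr rfl fun j _ => ?_
    rw [← isSymmetric_toEuclideanLin_iff.2 hA, heig, real_inner_smul_left, real_inner_comm x]
    ring
  rw [hexpand, ← b.sum_sq_inner_left, Finset.mul_sum]
  exact Finset.sum_le_sum fun j _ => mul_le_mul_of_nonneg_right (hc j) (sq_nonneg _)

theorem Matrix.toEuclideanLin_apply_toEuclideanLin_inv {𝕜 m : Type*} [RCLike 𝕜] [Fintype m]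
    [DecidableEq m] {A : Matrix m m 𝕜} (hA : IsUnit A.det) (v : EuclideanSpace 𝕜 m) :
    Matrix.toEuclideanLin A (Matrix.toEuclideanLin A⁻¹ v) = v := by
  ext i
  simp [Matrix.mulVec_mulVec, Matrix.mul_nonsing_inv A hA]

section HMetric

variable {n : ℕ} {H : Matrix (Fin n) (Fin n) ℝ}

theorem lambdaMin_le_eigenvalues (hH : H.IsHermitian) (i : Fin n) :
    lambdaMin H hH ≤ hH.eigenvalues i :=
  ciInf_le (Set.finite_range _).bddBelow i

theorem Matrix.PosSemidef.lambdaMin_nonneg (hH : H.PosSemidef) : 0 ≤ lambdaMin H hH.1 :=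
  Real.iInf_nonneg hH.eigenvalues_nonneg

theorem Matrix.PosSemidef.hNorm_sq (hH : H.PosSemidef) (u : EuclideanSpace ℝ (Fin n)) :
    hNorm H u ^ 2 = hIP H u u :=
  Real.sq_sqrt ((Matrix.isPositive_toEuclideanLin_iff.2 hH).inner_nonneg_right u)

theorem Matrix.IsHermitian.hIP_toEuclideanLin_inv_left (hH : H.IsHermitian) (hdet : IsUnit H.det)
    (v u : EuclideanSpace ℝ (Fin n)) : hIP H (Matrix.toEuclideanLin H⁻¹ v) u = ⟪v, u⟫ := by
  rw [hIP, ← isSymmetric_toEuclideanLin_iff.2 hH,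
    Matrix.toEuclideanLin_apply_toEuclideanLin_inv hdet]

end HMetric

/-- for convex `ℓ` with `L`-Lipschitz gradient, the map
`u ↦ H⁻¹∇ℓ(u)` is `(λ_min(H)/L)`-cocoercive with respect to `⟨·,·⟩_H`. -/
theorem stmt_1 {n : ℕ} (H : Matrix (Fin n) (Fin n) ℝ) (hH : H.PosDef)
    (ℓ : EuclideanSpace ℝ (Fin n) → ℝ)
    (hconv : ConvexOn ℝ Set.univ ℓ) (hdiff : Differentiable ℝ ℓ)
    (L : ℝ) (hL : 0 < L)
    (hLip : ∀ u v, ‖gradient ℓ u - gradient ℓ v‖ ≤ L * ‖u - v‖) :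
    ∀ u₁ u₂,
      hIP H (Matrix.toEuclideanLin H⁻¹ (gradient ℓ u₁) -
              Matrix.toEuclideanLin H⁻¹ (gradient ℓ u₂)) (u₁ - u₂) ≥
        (lambdaMin H hH.1 / L) *
          hNorm H (Matrix.toEuclideanLin H⁻¹ (gradient ℓ u₁) -
                    Matrix.toEuclideanLin H⁻¹ (gradient ℓ u₂)) ^ 2 := by
  intro u₁ u₂
  set Δ := gradient ℓ u₁ - gradient ℓ u₂
  have hdet : IsUnit H.det := hH.det_pos.ne'.isUnit
  rw [← map_sub, hH.1.hIP_toEuclideanLin_inv_left hdet, hH.posSemidef.hNorm_sq, hIP,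
    Matrix.toEuclideanLin_apply_toEuclideanLin_inv hdet]
  have hrayleigh : lambdaMin H hH.1 * ‖Matrix.toEuclideanLin H⁻¹ Δ‖ ^ 2 ≤
      ⟪Matrix.toEuclideanLin H⁻¹ Δ, Δ⟫ := by
    simpa only [Matrix.toEuclideanLin_apply_toEuclideanLin_inv hdet] using
      hH.1.mul_norm_sq_le_inner_toEuclideanLin (lambdaMin_le_eigenvalues hH.1)
        (Matrix.toEuclideanLin H⁻¹ Δ)
  calc lambdaMin H hH.1 / L * ⟪Matrix.toEuclideanLin H⁻¹ Δ, Δ⟫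
      ≤ ‖Δ‖ ^ 2 / L := by
        rw [div_mul_eq_mul_div]
        gcongr
        exact real_mul_inner_le_norm_sq_of_mul_norm_sq_le_inner
          hH.posSemidef.lambdaMin_nonneg hrayleigh
    _ ≤ ⟪Δ, u₁ - u₂⟫ := hconv.norm_gradient_sub_sq_div_le_inner hdiff hL hLip u₁ u₂
end

section
/- Let U ⊆ ℝⁿ and Ω ⊆ ℝ^m be compact, let ℓ : ℝⁿ × Ω → ℝ be continuous, let T : ℝⁿ × Ω → ℝⁿ have closed graph on U × Ω, and assume Fix(T(·,ω)) ∩ U is nonempty for each ω ∈ Ω. Define φ(ω) := inf{ℓ(u,ω) : u ∈ Fix(T(·,ω)) ∩ U}. Suppose maps u^K : Ω → U (K ∈ ℕ) satisfy: (a) sup_{ω∈Ω} ‖u^K(ω) − T(u^K(ω),ω)‖ → 0 as K → ∞, and (b) for each ω ∈ Ω, φ_K(ω) := ℓ(u^K(ω),ω) → φ(ω) as K → ∞. If for each K there exists ω^K ∈ Ω with φ_K(ω^K) = inf_{ω∈Ω} φ_K(ω), then: (1) every limit point (ū, ω̄) of the sequence {(u^K(ω^K), ω^K)} satisfies φ(ω̄)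 = inf_{ω∈Ω} φ(ω) and T(ū, ω̄) = ū; and (2) inf_{ω∈Ω} φ_K(ω) → inf_{ω∈Ω} φ(ω) as K → ∞. -/
open Filter Topology

/-- abstract approximation quality result (Proposition A.7 of the
paper): limit points of `(u^K(ω^K), ω^K)` with `ω^K` minimizing
`φ_K(ω) = ℓ(u^K(ω),ω)` over `Ω` solve the bilevel problem, and
`inf_Ω φ_K → inf_Ω φ`. -/
theorem stmt_12 {n m : ℕ}
    (U : Set (EuclideanSpace ℝ (Fin n))) (Ω : Set (EuclideanSpace ℝ (Fin m)))
    (hUcp : IsCompact U) (hΩcp : IsCompact Ω)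
    (ℓ : EuclideanSpace ℝ (Fin n) → EuclideanSpace ℝ (Fin m) → ℝ)
    (hℓc : Continuous fun p : EuclideanSpace ℝ (Fin n) × EuclideanSpace ℝ (Fin m) =>
      ℓ p.1 p.2)
    (T : EuclideanSpace ℝ (Fin n) → EuclideanSpace ℝ (Fin m) → EuclideanSpace ℝ (Fin n))
    (hTgraph : ∀ (x : ℕ → EuclideanSpace ℝ (Fin n)) (w : ℕ → EuclideanSpace ℝ (Fin m))
      (x₀ : EuclideanSpace ℝ (Fin n)) (w₀ : EuclideanSpace ℝ (Fin m))
      (v : EuclideanSpace ℝ (Fin n)),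
      (∀ j, x j ∈ U) → (∀ j, w j ∈ Ω) →
      Tendsto x atTop (𝓝 x₀) → Tendsto w atTop (𝓝 w₀) →
      Tendsto (fun j => T (x j) (w j)) atTop (𝓝 v) → v = T x₀ w₀)
    (hFix : ∀ ω ∈ Ω, ({x | T x ω = x} ∩ U).Nonempty)
    (φ : EuclideanSpace ℝ (Fin m) → ℝ)
    (hφ : ∀ ω, φ ω = sInf ((fun x => ℓ x ω) '' ({x | T x ω = x} ∩ U)))
    (uK : ℕ → EuclideanSpace ℝ (Fin m) → EuclideanSpace ℝ (Fin n))
    (huKU : ∀ K ω, uK K ω ∈ U)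
    (ha : ∀ ε > (0 : ℝ), ∃ K₀ : ℕ, ∀ K, K₀ ≤ K → ∀ ω ∈ Ω,
      ‖uK K ω - T (uK K ω) ω‖ ≤ ε)
    (hb : ∀ ω ∈ Ω, Tendsto (fun K => ℓ (uK K ω) ω) atTop (𝓝 (φ ω)))
    (ωK : ℕ → EuclideanSpace ℝ (Fin m))
    (hωKΩ : ∀ K, ωK K ∈ Ω)
    (hωKmin : ∀ K, ∀ ω ∈ Ω, ℓ (uK K (ωK K)) (ωK K) ≤ ℓ (uK K ω) ω) :
    (∀ (ub : EuclideanSpace ℝ (Fin n)) (ωb : EuclideanSpace ℝ (Fin m)),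
      (∃ ψ : ℕ → ℕ, StrictMono ψ ∧
        Tendsto (fun j => (uK (ψ j) (ωK (ψ j)), ωK (ψ j))) atTop (𝓝 (ub, ωb))) →
      φ ωb = sInf (φ '' Ω) ∧ T ub ωb = ub) ∧
    Tendsto (fun K => sInf ((fun ω => ℓ (uK K ω) ω) '' Ω)) atTop
      (𝓝 (sInf (φ '' Ω))) := by
  have hΩne : Ω.Nonempty := ⟨ωK 0, hωKΩ 0⟩
  have hUne : U.Nonempty := ⟨uK 0 (ωK 0), huKU 0 _⟩
  obtain ⟨p, hpmem, hpmin⟩ := (hUcp.prod hΩcp).exists_isMinOn (hUne.prod hΩne)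
      hℓc.continuousOn
  set c := ℓ p.1 p.2 with hc
  have hlbU : ∀ x ∈ U, ∀ ω ∈ Ω, c ≤ ℓ x ω := fun x hx ω hω => hpmin (Set.mk_mem_prod hx hω)
  have hφlb : ∀ ω ∈ Ω, c ≤ φ ω := by
    intro ω hω
    rw [hφ ω]
    exact le_csInf ((hFix ω hω).image _)
      (fun y ⟨z, hz, h⟩ => h ▸ hlbU z hz.2 ω hω)
  have hbddφ : BddBelow (φ '' Ω) := ⟨c, fun y ⟨ω, hω, h⟩ => h ▸ hφlb ω hω⟩
  have hφne : (φ '' Ω).Nonempty := hΩne.image φ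
  have key : ∀ ks : ℕ → ℕ, Tendsto ks atTop atTop →
      ∀ ub ωb, Tendsto (fun j => (uK (ks j) (ωK (ks j)), ωK (ks j))) atTop (𝓝 (ub, ωb)) →
      φ ωb = sInf (φ '' Ω) ∧ T ub ωb = ub ∧ ℓ ub ωb = sInf (φ '' Ω) := by
    intro ks hks ub ωb hpt
    set x : ℕ → EuclideanSpace ℝ (Fin n) := fun j => uK (ks j) (ωK (ks j)) with hxdef
    set w : ℕ → EuclideanSpace ℝ (Fin m) := fun j => ωK (ks j) with hwdef
    have htx : Tendsto x atTop (𝓝 ub) := (continuous_fst.tendsto _).comp hpt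
    have htw : Tendsto w atTop (𝓝 ωb) := (continuous_snd.tendsto _).comp hpt
    have hubU : ub ∈ U :=
      hUcp.isClosed.mem_of_tendsto htx (Eventually.of_forall fun j => huKU _ _)
    have hωbΩ : ωb ∈ Ω :=
      hΩcp.isClosed.mem_of_tendsto htw (Eventually.of_forall fun j => hωKΩ _)
    have hnorm : Tendsto (fun j => ‖x j - T (x j) (w j)‖) atTop (𝓝 0) := by
      rw [Metric.tendsto_atTop]
      intro ε hε
      obtain ⟨K₀, hK₀⟩ := ha (ε / 2) (by linarith)
      obtain ⟨N, hN⟩ := eventually_atTop.mp (hks.eventually_ge_atTop K₀)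
      refine ⟨N, fun j hj => ?_⟩
      have := hK₀ (ks j) (hN j hj) (w j) (hωKΩ _)
      rw [Real.dist_eq, sub_zero, abs_of_nonneg (norm_nonneg _)]
      linarith
    have hd : Tendsto (fun j => x j - T (x j) (w j)) atTop (𝓝 0) := by
      rw [tendsto_zero_iff_norm_tendsto_zero]; exact hnorm
    have hTx : Tendsto (fun j => T (x j) (w j)) atTop (𝓝 ub) := by
      simpa using htx.sub hd
    have hfix : T ub ωb = ub :=
      (hTgraph x w ub ωb ub (fun j => huKU _ _) (fun j => hωKΩ _) htx htw hTx).symm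
    have hℓlim : Tendsto (fun j => ℓ (x j) (w j)) atTop (𝓝 (ℓ ub ωb)) :=
      (hℓc.tendsto (ub, ωb)).comp hpt
    have hφle : φ ωb ≤ ℓ ub ωb := by
      rw [hφ]
      exact csInf_le ⟨c, fun y ⟨z, hz, h⟩ => h ▸ hlbU z hz.2 ωb hωbΩ⟩
        ⟨ub, ⟨hfix, hubU⟩, rfl⟩
    have hleφ : ∀ ω ∈ Ω, ℓ ub ωb ≤ φ ω := by
      intro ω hω
      have h2 : Tendsto (fun j => ℓ (uK (ks j) ω) ω) atTop (𝓝 (φ ω)) :=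
        (hb ω hω).comp hks
      exact le_of_tendsto_of_tendsto' hℓlim h2 (fun j => hωKmin (ks j) ω hω)
    have hle : ℓ ub ωb ≤ sInf (φ '' Ω) :=
      le_csInf hφne (fun y ⟨ω, hω, h⟩ => h ▸ hleφ ω hω)
    have hge : sInf (φ '' Ω) ≤ φ ωb := csInf_le hbddφ ⟨ωb, hωbΩ, rfl⟩
    exact ⟨le_antisymm (hφle.trans hle) hge, hfix,
      le_antisymm hle (hge.trans hφle)⟩
  constructor
  · rintro ub ωb ⟨ψ, hψ, hψt⟩
    obtain ⟨h1, h2, -⟩ := key ψ hψ.tendsto_atTop ub ωb hψt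
    exact ⟨h1, h2⟩
  · have hval : ∀ K, sInf ((fun ω => ℓ (uK K ω) ω) '' Ω) = ℓ (uK K (ωK K)) (ωK K) := by
      intro K
      have hmem : ℓ (uK K (ωK K)) (ωK K) ∈ (fun ω => ℓ (uK K ω) ω) '' Ω :=
        ⟨ωK K, hωKΩ K, rfl⟩
      refine le_antisymm (csInf_le ⟨_, fun y ⟨ω, hω, h⟩ => le_of_le_of_eq (hωKmin K ω hω) h⟩ hmem)
        (le_csInf ⟨_, hmem⟩ (fun y ⟨ω, hω, h⟩ => le_of_le_of_eq (hωKmin K ω hω) h))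
    simp only [hval]
    apply tendsto_of_subseq_tendsto
    intro ns hns
    obtain ⟨⟨ub, ωb⟩, hq, ms, hms, hmt⟩ := (hUcp.prod hΩcp).tendsto_subseq
      (x := fun j => (uK (ns j) (ωK (ns j)), ωK (ns j)))
      (fun j => ⟨huKU _ _, hωKΩ _⟩)
    have hmt' : Tendsto (fun j => (uK (ns (ms j)) (ωK (ns (ms j))), ωK (ns (ms j))))
        atTop (𝓝 (ub, ωb)) := hmt
    obtain ⟨-, -, h3⟩ := key (ns ∘ ms) (hns.comp hms.tendsto_atTop) ub ωb hmt'
    refine ⟨ms, ?_⟩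
    rw [← h3]
    exact (hℓc.tendsto (ub, ωb)).comp hmt'
end
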